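/- Let (X, 𝒜, μ) be a measure space and f, g zero-divisors. Then f and g are adjacent to the same set of vertices in the comaximal graph (i.e., for every zero-divisor h, μ(Z(f) ∩ Z(h)) = 0 ↔ μ(Z(g) ∩ Z(h)) = 0) if and only if μ(Z(f) △ Z(g)) = 0. -/

import Mathlib

/-! If `Z(f) = Z(g)` a.e., then `Z(f) ∩ Z(h) = Z(g) ∩ Z(h)` a.e. for every `h`. Conversely, the
indicator of `Z(f)` is a zero-divisor with zero set `Z(f)ᶜ`, hence a neighbour of `f`; being then a
neighbour of `g` says exactly that `Z(g) \ Z(f)` is null, and symmetrically. -/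

open MeasureTheory Set

def IsZeroDiv {X : Type*} [MeasurableSpace X] (μ : Measure X) (f : X → ℝ) : Prop :=
  Measurable f ∧ 0 < μ {x | f x = 0} ∧ 0 < μ {x | f x = 0}ᶜ

theorem setOf_indicator_one_eq_zero {X : Type*} (s : Set X) :
    {x | s.indicator (1 : X → ℝ) x = 0} = sᶜ := by
  ext x
  by_cases hx : x ∈ s <;> simp [hx]

theorem isZeroDiv_indicator_one {X : Type*} [MeasurableSpace X] {μ : Measure X} {s : Set X}
    (hs : MeasurableSet s) (hs_compl : 0 < μ sᶜ) (hs_pos : 0 < μ s) :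
    IsZeroDiv μ (s.indicator 1) := by
  refine ⟨measurable_const.indicator hs, ?_, ?_⟩ <;>
    simpa only [setOf_indicator_one_eq_zero, compl_compl]

theorem IsZeroDiv.isZeroDiv_indicator_zeroSet {X : Type*} [MeasurableSpace X]
    {μ : Measure X} {f : X → ℝ} (hf : IsZeroDiv μ f) :
    IsZeroDiv μ ({x | f x = 0}.indicator 1) :=
  isZeroDiv_indicator_one (hf.1 (measurableSet_singleton 0)) hf.2.2 hf.2.1

theorem measure_diff_zeroSet_null_of_neighbors_subset {X : Type*} [MeasurableSpace X]
    {μ : Measure X} {f g : X → ℝ} (hf : IsZeroDiv μ f)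
    (H : ∀ h : X → ℝ, IsZeroDiv μ h → μ ({x | f x = 0} ∩ {x | h x = 0}) = 0 →
      μ ({x | g x = 0} ∩ {x | h x = 0}) = 0) :
    μ ({x | g x = 0} \ {x | f x = 0}) = 0 := by
  have := H _ hf.isZeroDiv_indicator_zeroSet
  rw [setOf_indicator_one_eq_zero] at this
  exact this (by simp)

theorem same_neighbors_iff_symmDiff_null {X : Type*} [MeasurableSpace X]
    (μ : Measure X) (f g : X → ℝ) (hf : IsZeroDiv μ f) (hg : IsZeroDiv μ g) :
    (∀ h : X → ℝ, IsZeroDiv μ h →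
        (μ ({x | f x = 0} ∩ {x | h x = 0}) = 0 ↔
          μ ({x | g x = 0} ∩ {x | h x = 0}) = 0)) ↔
      μ (symmDiff {x | f x = 0} {x | g x = 0}) = 0 := by
  rw [measure_symmDiff_eq_zero_iff]
  constructor
  · intro H
    exact ae_eq_set.mpr
      ⟨measure_diff_zeroSet_null_of_neighbors_subset hg fun h hh => (H h hh).2,
        measure_diff_zeroSet_null_of_neighbors_subset hf fun h hh => (H h hh).1⟩
  · intro H h _
    rw [measure_congr (H.inter (ae_eq_refl {x | h x = 0}))]
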